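/- arXiv:1603.08655 — 4 statements merged into one kernel-verified Lean document; each statement's English description precedes it below -/
import Mathlib

section
/- Let N be a reticulation-visible network. Then for every reticulation node r of N, the unique child of r and all of the parents of r are tree nodes of N (Reticulation separability). -/
/-!
Framework for rooted phylogenetic networks, formalized as directed graphs
given by an adjacency relation `A : V → V → Prop` on a vertex type `V`,
with a distinguished root `ρ`.  Leaves are identified with their (unique)
labels, i.e. the labelling is the identity on leaf vertices.
-/

namespace PhyloNet

variable {V : Type} {W : Type}

/-- Indegree of a vertex. -/
noncomputable def inDeg (A : V → V → Prop) (v : V) : ℕ := {u | A u v}.ncard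

/-- Outdegree of a vertex. -/
noncomputable def outDeg (A : V → V → Prop) (v : V) : ℕ := {w | A v w}.ncard

/-- `p` is a directed path (walk) from `u` to `v`, given as the list of its vertices. -/
def IsPath (A : V → V → Prop) (u v : V) (p : List V) : Prop :=
  p.Chain' A ∧ p.head? = some u ∧ p.getLast? = some v

/-- `A` with root `ρ` is a phylogenetic network: a finite rooted acyclic digraph whose
root has indegree 0 and outdegree ≥ 2, from which every node is reachable, and in which
every non-root node is either a leaf (indegree 1, outdegree 0), an internal tree node
(indegree 1, outdegree ≥ 2) or a reticulation (indegree ≥ 2, outdegree 1). -/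
structure IsNetwork (A : V → V → Prop) (ρ : V) : Prop where
  finite : Finite V
  acyclic : ∀ v, ¬ Relation.TransGen A v v
  root_indeg : inDeg A ρ = 0
  root_outdeg : 2 ≤ outDeg A ρ
  reach_from_root : ∀ v, Relation.ReflTransGen A ρ v
  degree_cond : ∀ v, v ≠ ρ →
    (inDeg A v = 1 ∧ (outDeg A v = 0 ∨ 2 ≤ outDeg A v)) ∨ (2 ≤ inDeg A v ∧ outDeg A v = 1)

/-- Reticulation node: indegree ≥ 2 and outdegree 1. -/
def IsRet (A : V → V → Prop) (v : V) : Prop := 2 ≤ inDeg A v ∧ outDeg A v = 1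

/-- Leaf: indegree 1 and outdegree 0. -/
def IsLeaf (A : V → V → Prop) (v : V) : Prop := inDeg A v = 1 ∧ outDeg A v = 0

/-- Tree node: any node that is not a reticulation node. -/
def IsTreeNode (A : V → V → Prop) (v : V) : Prop := ¬ IsRet A v

/-- `u` is visible on `v`: every directed path from the root `ρ` to `v` contains `u`. -/
def Visible (A : V → V → Prop) (ρ u v : V) : Prop := ∀ p, IsPath A ρ v p → u ∈ p

/-- A network is reticulation-visible if every reticulation node is visible on some leaf. -/
def RetVisible (A : V → V → Prop) (ρ : V) : Prop :=
  ∀ r, IsRet A r → ∃ ℓ, IsLeaf A ℓ ∧ Visible A ρ r ℓ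

/-- Undirected adjacency in the subgraph `N − R(N)` induced on tree nodes. -/
def TAdj (A : V → V → Prop) (u v : V) : Prop :=
  IsTreeNode A u ∧ IsTreeNode A v ∧ (A u v ∨ A v u)

/-- `S` is a tree node component: a connected component (ignoring directions) of the
subgraph induced on the tree nodes. -/
def IsTNC (A : V → V → Prop) (S : Set V) : Prop :=
  ∃ u, IsTreeNode A u ∧ S = {v | Relation.ReflTransGen (TAdj A) u v}

/-- `r` is the root of the tree node component `S`: it lies in `S` and has indegree 0
within `N − R(N)`, i.e. it has no tree-node parent. -/
def CompRoot (A : V → V → Prop) (S : Set V) (r : V) : Prop :=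
  r ∈ S ∧ ∀ u, IsTreeNode A u → ¬ A u r

/-- Tree node component `C'` is below tree node component `C''`. -/
def Below (A : V → V → Prop) (C' C'' : Set V) : Prop :=
  ∃ r, IsRet A r ∧ (∃ c, A r c ∧ CompRoot A C' c) ∧ (∃ p ∈ C'', A p r)

/-- A big tree node component: a tree node component with at least two nodes. -/
def BigTNC (A : V → V → Prop) (C : Set V) : Prop :=
  IsTNC A C ∧ ∃ a ∈ C, ∃ b ∈ C, a ≠ b

/-- A single-leaf component: its node set is `{ℓ}` for some leaf `ℓ`. -/
def SingleLeafTNC (A : V → V → Prop) (C : Set V) : Prop :=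
  ∃ ℓ, IsLeaf A ℓ ∧ C = {ℓ}

/-- A lowest big tree node component: a big tree node component `C` such that every
tree node component whose root is a proper descendant of the root of `C` is a
single-leaf component. -/
def LowestBig (A : V → V → Prop) (C : Set V) : Prop :=
  BigTNC A C ∧ ∀ C' r' rC, IsTNC A C' → CompRoot A C' r' → CompRoot A C rC →
    Relation.TransGen A rC r' → SingleLeafTNC A C'

/-- An inner reticulation: all of its parents lie in one and the same tree node component. -/
def InnerRet (A : V → V → Prop) (r : V) : Prop :=
  IsRet A r ∧ ∃ S, IsTNC A S ∧ ∀ p, A p r → p ∈ S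

/-- `IR(C)`: reticulations all of whose parents lie in `C`. -/
def IRset (A : V → V → Prop) (C : Set V) : Set V :=
  {r | IsRet A r ∧ ∀ p, A p r → p ∈ C}

/-- `CR(C)`: reticulations with at least one parent in `C` and at least one parent outside `C`. -/
def CRset (A : V → V → Prop) (C : Set V) : Set V :=
  {r | IsRet A r ∧ (∃ p, A p r ∧ p ∈ C) ∧ (∃ p, A p r ∧ p ∉ C)}

/-- `L_C`: the leaves of the network lying in `C` together with the children of the
inner reticulations below `C`. -/
def LCset (A : V → V → Prop) (C : Set V) : Set V :=
  {ℓ | ℓ ∈ C ∧ IsLeaf A ℓ} ∪ {x | ∃ r ∈ IRset A C, A r x}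

/-- Bicombining: every reticulation node has indegree exactly 2. -/
def Bicombining (A : V → V → Prop) : Prop := ∀ r, IsRet A r → inDeg A r = 2

/-- Galled: every reticulation node `r` has an ancestor `u` admitting two
internal-node-disjoint directed paths from `u` to `r` in which every node other
than `r` is a tree node. -/
def Galled (A : V → V → Prop) : Prop :=
  ∀ r, IsRet A r → ∃ u, Relation.TransGen A u r ∧ ∃ p₁ p₂ : List V,
    IsPath A u r p₁ ∧ IsPath A u r p₂ ∧ p₁ ≠ p₂ ∧
    (∀ x, x ∈ p₁ → x ∈ p₂ → x = u ∨ x = r) ∧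
    (∀ x ∈ p₁, x ≠ r → IsTreeNode A x) ∧ (∀ x ∈ p₂, x ≠ r → IsTreeNode A x)

/-- Restriction of a digraph to a vertex subset. -/
def Restrict (A : V → V → Prop) (S : Set V) : V → V → Prop :=
  fun a b => a ∈ S ∧ b ∈ S ∧ A a b

/-- Descendants of `u` (including `u`); the vertex set of the subnetwork `D_N(u)`. -/
def Desc (A : V → V → Prop) (u : V) : Set V := {v | Relation.ReflTransGen A u v}

/-- Binary network: the root has outdegree 2, leaves have degree 1, and every other
node has total degree 3. -/
def IsBinary (A : V → V → Prop) (ρ : V) : Prop :=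
  outDeg A ρ = 2 ∧ ∀ v, v ≠ ρ →
    (inDeg A v = 1 ∧ outDeg A v = 0) ∨ (inDeg A v = 1 ∧ outDeg A v = 2) ∨
    (inDeg A v = 2 ∧ outDeg A v = 1)

/-- A phylogenetic tree: a network with no reticulation nodes. -/
def IsPhyloTree (A : W → W → Prop) (ρ : W) : Prop :=
  IsNetwork A ρ ∧ ∀ w, ¬ IsRet A w

/-- A node with indegree 1 and outdegree 1 (a suppressible node). -/
def Deg11 (A : V → V → Prop) (v : V) : Prop := inDeg A v = 1 ∧ outDeg A v = 1

/-- There is a directed path from `a` to `b` (of length ≥ 1) all of whose internal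
nodes are suppressible. -/
def SubdivPath (A : V → V → Prop) (a b : V) : Prop :=
  ∃ p : List V, IsPath A a b p ∧ 2 ≤ p.length ∧ ∀ z ∈ p, z ≠ a → z ≠ b → Deg11 A z

/-- `φ` witnesses that the digraph `A'` on the vertex set `S` is a subdivision of the
tree `AT` restricted to the vertex set `SW`: `φ` injectively maps the tree nodes onto
the non-suppressible nodes, edges of the tree correspond exactly to directed paths
whose internal nodes are suppressible, and leaves are mapped according to the leaf
correspondence `θ` (same labels). -/
def SubdivWitness (A' : V → V → Prop) (S : Set V) (AT : W → W → Prop) (SW : Set W)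
    (θ : W → V) (φ : W → V) : Prop :=
  Set.InjOn φ SW ∧ (∀ w ∈ SW, φ w ∈ S) ∧
  (∀ x ∈ S, ¬ Deg11 (Restrict A' S) x → ∃ w ∈ SW, φ w = x) ∧
  (∀ x ∈ SW, ∀ y ∈ SW, (Restrict AT SW x y ↔ SubdivPath (Restrict A' S) (φ x) (φ y))) ∧
  (∀ w ∈ SW, outDeg (Restrict AT SW) w = 0 → φ w = θ w)

/-- The digraph `A'` on vertex set `S` is a subdivision of the tree `AT` on `SW`. -/
def IsSubdivisionOf (A' : V → V → Prop) (S : Set V) (AT : W → W → Prop) (SW : Set W)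
    (θ : W → V) : Prop :=
  ∃ φ, SubdivWitness A' S AT SW θ φ

/-- `E`, `D`, `φ` witness that the subnetwork of `A` on vertex set `S` displays the
subtree of `AT` on vertex set `SW`: `E` is a set of reticulation edges of the
subnetwork containing all but one of the incoming edges of each reticulation node of
the subnetwork, `D` is a set of deleted nodes, and `φ` witnesses that the result is a
subdivision of the subtree. -/
def DisplayWitness (A : V → V → Prop) (S : Set V) (AT : W → W → Prop) (SW : Set W)
    (θ : W → V) (E : Set (V × V)) (D : Set V) (φ : W → V) : Prop :=
  (∀ e ∈ E, Restrict A S e.1 e.2 ∧ 2 ≤ inDeg (Restrict A S) e.2) ∧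
  (∀ r ∈ S, 2 ≤ inDeg (Restrict A S) r →
     ∃ p, Restrict A S p r ∧ (p, r) ∉ E ∧ ∀ q, Restrict A S q r → q ≠ p → (q, r) ∈ E) ∧
  SubdivWitness (fun a b => Restrict A S a b ∧ (a, b) ∉ E) (S \ D) AT SW θ φ

/-- The subnetwork of `A` on vertex set `S` displays the subtree of `AT` on `SW`. -/
def DisplaysOn (A : V → V → Prop) (S : Set V) (AT : W → W → Prop) (SW : Set W)
    (θ : W → V) : Prop :=
  ∃ E D φ, DisplayWitness A S AT SW θ E D φ

/-- The leaves of the subnetwork of `A` induced on vertex set `S`. -/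
def SubLeaves (A : V → V → Prop) (S : Set V) : Set V :=
  {v | v ∈ S ∧ outDeg (Restrict A S) v = 0}

/-- `B` is a soft cluster in the subnetwork of `A` on vertex set `S`: `B` is the
cluster of some node of some phylogenetic tree displayed by that subnetwork. -/
def SoftClusterOn (A : V → V → Prop) (S : Set V) (B : Set V) : Prop :=
  ∃ (W : Type) (AT : W → W → Prop) (ρT : W) (θ : W → V),
    IsPhyloTree AT ρT ∧
    Set.BijOn θ {w | IsLeaf AT w} (SubLeaves A S) ∧
    DisplaysOn A S AT Set.univ θ ∧
    ∃ x : W, θ '' {w | IsLeaf AT w ∧ Relation.ReflTransGen AT x w} = B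

/-- `B` is a soft cluster of the node `u` of `N`: there are `E` and `D` as in the
definition of display such that `u` is a node of `(N − E) − D` and the set of leaves
of `N` below `u` in `(N − E) − D` equals `B`. -/
def SoftClusterAt (A : V → V → Prop) (u : V) (B : Set V) : Prop :=
  ∃ (E : Set (V × V)) (D : Set V),
    (∀ e ∈ E, A e.1 e.2 ∧ 2 ≤ inDeg A e.2) ∧
    (∀ r, 2 ≤ inDeg A r → ∃ p, A p r ∧ (p, r) ∉ E ∧ ∀ q, A q r → q ≠ p → (q, r) ∈ E) ∧
    (∃ (W : Type) (AT : W → W → Prop) (ρT : W) (θ : W → V),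
      IsPhyloTree AT ρT ∧ Set.BijOn θ {w | IsLeaf AT w} {v | IsLeaf A v} ∧
      IsSubdivisionOf (fun a b => A a b ∧ (a, b) ∉ E) (Set.univ \ D) AT Set.univ θ) ∧
    u ∉ D ∧
    {ℓ | IsLeaf A ℓ ∧
      Relation.ReflTransGen (fun a b => A a b ∧ (a, b) ∉ E ∧ a ∉ D ∧ b ∉ D) u ℓ} = B

/-- `w` is the lowest common ancestor of the set `X` in the (tree-like) digraph `A`. -/
def IsLCAIn (A : V → V → Prop) (X : Set V) (w : V) : Prop :=
  (∀ x ∈ X, Relation.ReflTransGen A w x) ∧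
  ∀ w', (∀ x ∈ X, Relation.ReflTransGen A w' x) → Relation.ReflTransGen A w' w

end PhyloNet

/-!
Let `u` be a node with a single child `v`, and let `v` have a second parent `q`. If `u` were
visible on some node `ℓ ≠ u`, then `ℓ` would lie below `v`, and the path from the root through
`q` and `v` to `ℓ` would have to pass through `u`; `u` can be neither above `q` nor below `v`
without closing a cycle through `v`. A reticulation with a reticulation parent or child is such
a pair `u → v`, so it contradicts the visibility of `u` on a leaf.
-/

namespace PhyloNet

open Relation

variable {V : Type} {A : V → V → Prop}

theorem IsPath.reflTransGen_of_mem {u v x : V} {p : List V} (hp : IsPath A u v p)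
    (hx : x ∈ p) : ReflTransGen A u x ∧ ReflTransGen A x v := by
  obtain ⟨hchain, hhead, hlast⟩ := hp
  obtain ⟨s, t, rfl⟩ := List.append_of_mem hx
  obtain ⟨hleft, hright⟩ := List.isChain_split.mp hchain
  have hs : (s ++ [x]).head? = some u := by cases s <;> simpa using hhead
  have ht : (x :: t).getLast? = some v := by simpa using hlast
  constructor
  · have := List.relationReflTransGen_of_exists_isChain _ hleft (by simp)
    rwa [(List.head_eq_iff_head?_eq_some _).mpr hs, List.getLast_append_singleton] at this
  · have := List.relationReflTransGen_of_exists_isChain _ hright (by simp)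
    rwa [(List.getLast_eq_iff_getLast?_eq_some _).mpr ht, List.head_cons] at this

theorem exists_isPath_of_reflTransGen {u v : V} (h : ReflTransGen A u v) :
    ∃ p, IsPath A u v p := by
  obtain ⟨l, hchain, hlast⟩ := List.exists_isChain_cons_of_relationReflTransGen h
  exact ⟨u :: l, hchain, rfl, by rw [List.getLast?_eq_some_getLast (List.cons_ne_nil u l), hlast]⟩

theorem IsPath.append {u x y v : V} {p q : List V} (hp : IsPath A u x p) (hxy : A x y)
    (hq : IsPath A y v q) : IsPath A u v (p ++ q) := by
  obtain ⟨hpchain, hphead, hplast⟩ := hp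
  obtain ⟨hqchain, hqhead, hqlast⟩ := hq
  refine ⟨List.IsChain.append hpchain hqchain ?_, by simp [hphead], by simp [hqlast]⟩
  simp_all

theorem eq_of_outDeg_eq_one {u v w : V} (hu : outDeg A u = 1) (hv : A u v) (hw : A u w) :
    w = v := by
  obtain ⟨a, ha⟩ := Set.ncard_eq_one.mp hu
  have hv' : v ∈ ({a} : Set V) := ha ▸ hv
  have hw' : w ∈ ({a} : Set V) := ha ▸ hw
  rw [Set.mem_singleton_iff.mp hv', Set.mem_singleton_iff.mp hw']

theorem exists_parent_ne_of_two_le_inDeg {v : V} (hv : 2 ≤ inDeg A v) (p : V) :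
    ∃ q, A q v ∧ q ≠ p :=
  Set.exists_ne_of_one_lt_ncard hv p

theorem reflTransGen_child_of_outDeg_eq_one {u v w : V} (hu : outDeg A u = 1) (huv : A u v)
    (huw : ReflTransGen A u w) (hwu : w ≠ u) : ReflTransGen A v w := by
  rcases huw.cases_head with rfl | ⟨c, huc, hcw⟩
  · exact (hwu rfl).elim
  · rwa [← eq_of_outDeg_eq_one hu huv huc]

theorem not_visible_of_child_has_other_parent {ρ u v q ℓ : V}
    (hacyclic : ∀ x, ¬ TransGen A x x) (hreach : ∀ x, ReflTransGen A ρ x)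
    (hu : outDeg A u = 1) (huv : A u v) (hqv : A q v) (hqu : q ≠ u) (hℓu : ℓ ≠ u) :
    ¬ Visible A ρ u ℓ := by
  intro hvis
  obtain ⟨p₀, hp₀⟩ := exists_isPath_of_reflTransGen (hreach ℓ)
  have hvℓ : ReflTransGen A v ℓ :=
    reflTransGen_child_of_outDeg_eq_one hu huv (hp₀.reflTransGen_of_mem (hvis p₀ hp₀)).2 hℓu
  obtain ⟨p₁, hp₁⟩ := exists_isPath_of_reflTransGen (hreach q)
  obtain ⟨p₂, hp₂⟩ := exists_isPath_of_reflTransGen hvℓ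
  rcases List.mem_append.mp (hvis _ (hp₁.append hqv hp₂)) with hu₁ | hu₂
  · have hvq := reflTransGen_child_of_outDeg_eq_one hu huv (hp₁.reflTransGen_of_mem hu₁).2 hqu
    exact hacyclic v (.tail' hvq hqv)
  · exact hacyclic v (.tail' (hp₂.reflTransGen_of_mem hu₂).1 huv)

theorem isTreeNode_child_of_visible {ρ r c ℓ : V} (hN : IsNetwork A ρ) (hr : IsRet A r)
    (hrc : A r c) (hℓ : IsLeaf A ℓ) (hvis : Visible A ρ r ℓ) : IsTreeNode A c := by
  intro hc
  obtain ⟨q, hqc, hqr⟩ := exists_parent_ne_of_two_le_inDeg hc.1 r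
  have hℓr : ℓ ≠ r := by
    rintro rfl
    simp [IsLeaf, hr.2] at hℓ
  exact not_visible_of_child_has_other_parent hN.acyclic hN.reach_from_root hr.2 hrc hqc hqr hℓr
    hvis

/-- **Reticulation separability.**
In a reticulation-visible network, the unique child and all the parents of every
reticulation node are tree nodes. -/
theorem reticulation_separability {V : Type} (A : V → V → Prop) (ρ : V)
    (hN : IsNetwork A ρ) (hRV : RetVisible A ρ)
    (r : V) (hr : IsRet A r) :
    (∀ c, A r c → IsTreeNode A c) ∧ (∀ p, A p r → IsTreeNode A p) := by
  constructor
  · intro c hrc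
    obtain ⟨ℓ, hℓ, hvis⟩ := hRV r hr
    exact isTreeNode_child_of_visible hN hr hrc hℓ hvis
  · intro p hpr hp
    obtain ⟨ℓ, hℓ, hvis⟩ := hRV p hp
    exact isTreeNode_child_of_visible hN hp hpr hℓ hvis hr

end PhyloNet
end

section
/- Let N be a reticulation-visible network and let E ⊆ E(N) be a set of edges such that the subnetwork N − E is connected and the set of leaves of N − E equals L(N). Then N − E is also reticulation-visible: every node of indegree at least 2 in N − E is visible in N − E on some leaf (Visibility inheritability). -/
namespace PhyloNet

/-- **Visibility inheritability.**
If `N` is reticulation-visible, `E ⊆ E(N)`, the spanning subnetwork `N − E` is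
connected (ignoring edge directions) and has the same leaves as `N`, then `N − E`
is reticulation-visible: every node of indegree at least 2 in `N − E` is visible in
`N − E` on some leaf. -/
theorem visibility_inheritability {V : Type} (A : V → V → Prop) (ρ : V)
    (hN : IsNetwork A ρ) (hRV : RetVisible A ρ)
    (E : Set (V × V)) (hE : ∀ e ∈ E, A e.1 e.2)
    (A' : V → V → Prop) (hA' : ∀ a b, A' a b ↔ A a b ∧ (a, b) ∉ E)
    (hconn : ∀ u v : V, Relation.ReflTransGen (fun a b => A' a b ∨ A' b a) u v)
    (hleaves : {v | outDeg A' v = 0 ∧ 1 ≤ inDeg A' v} = {v | IsLeaf A v}) :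
    ∀ r, 2 ≤ inDeg A' r → ∃ ℓ, IsLeaf A ℓ ∧ Visible A' ρ r ℓ := by
  intro r hr
  have hfin : Finite V := hN.finite
  have hsub : ∀ a b, A' a b → A a b := fun a b h => ((hA' a b).1 h).1
  have hin : 2 ≤ inDeg A r := by
    refine le_trans hr ?_
    exact Set.ncard_le_ncard (fun u hu => hsub u r hu) (Set.toFinite _)
  have hrρ : r ≠ ρ := by
    intro h
    rw [h, hN.root_indeg] at hin; omega
  have hret : IsRet A r := by
    rcases hN.degree_cond r hrρ with ⟨h1, _⟩ | h2
    · omega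
    · exact h2
  obtain ⟨ℓ, hℓ, hvis⟩ := hRV r hret
  refine ⟨ℓ, hℓ, fun p hp => hvis p ?_⟩
  exact ⟨hp.1.imp (fun {a b} h => hsub a b h), hp.2.1, hp.2.2⟩

end PhyloNet
end

section
/- Let N be a network. Then every connected component, ignoring edge directions, of the subgraph N − R(N) induced on the tree nodes of N contains exactly one node whose indegree within N − R(N) is zero, and this component is a tree in which all edges are directed away from that node. -/
/-!
Away from the root every tree node has indegree one, so in the subgraph `N − R(N)` every node
has at most one parent. Climbing parents, which terminates by acyclicity, leads from any node of
a component to a node `r` without a parent in `N − R(N)`. An undirected walk starting at `r`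
never leaves the descendants of `r`: stepping from a descendant to one of its parents can only
return to its unique parent. Hence the whole component lies below `r`, so `r` is its only
parentless node, and uniqueness of parents makes the directed path from `r` to each node unique.
-/

namespace PhyloNet

variable {V : Type}

section Forest

variable {R : V → V → Prop} {a b r v x : V} {l p q : List V}

lemma isPath_iff : IsPath R a b p ↔ p.IsChain R ∧ p.head? = some a ∧ p.getLast? = some b :=
  Iff.rfl

lemma not_isPath_nil : ¬ IsPath R a b [] := by simp [isPath_iff]

lemma isPath_append_singleton_iff :
    IsPath R a b (l ++ [x]) ↔ x = b ∧ (l = [] ∧ a = b ∨ ∃ w, IsPath R a w l ∧ R w b) := by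
  rcases l.eq_nil_or_concat' with rfl | ⟨l, y, rfl⟩
  · grind [isPath_iff, List.isChain_singleton]
  · simp only [isPath_iff, List.append_assoc, List.singleton_append, List.isChain_append_cons_cons,
      List.IsChain.singleton, and_true]
    grind

lemma exists_isPath_of_reflTransGen_s2 (h : Relation.ReflTransGen R a b) : ∃ p, IsPath R a b p := by
  induction h with
  | refl => exact ⟨[] ++ [a], isPath_append_singleton_iff.2 ⟨rfl, .inl ⟨rfl, rfl⟩⟩⟩
  | @tail b c _ hbc ih =>
    obtain ⟨p, hp⟩ := ih
    exact ⟨p ++ [c], isPath_append_singleton_iff.2 ⟨rfl, .inr ⟨b, hp, hbc⟩⟩⟩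

lemma exists_root_reflTransGen (hwf : WellFounded R) (v : V) :
    ∃ r, (∀ x, ¬ R x r) ∧ Relation.ReflTransGen R r v := by
  obtain ⟨r, hrv, hmin⟩ := hwf.has_min {x | Relation.ReflTransGen R x v} ⟨v, .refl⟩
  exact ⟨r, fun x hx => hmin x (hrv.head hx) hx, hrv⟩

lemma reflTransGen_of_symmGen (hpar : ∀ ⦃p q v⦄, R p v → R q v → p = q) (hr : ∀ x, ¬ R x r)
    (h : Relation.ReflTransGen (Relation.SymmGen R) r v) :
    Relation.ReflTransGen R r v := by
  induction h with
  | refl => rfl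
  | tail _ hbc ih =>
    rcases hbc with hbc | hcb
    · exact ih.tail hbc
    · rcases ih.cases_tail with rfl | ⟨d, hrd, hdb⟩
      · exact (hr _ hcb).elim
      · exact hpar hdb hcb ▸ hrd

lemma IsPath.eq_of_root (hpar : ∀ ⦃p q v⦄, R p v → R q v → p = q) (hr : ∀ x, ¬ R x r)
    (hp : IsPath R r v p) (hq : IsPath R r v q) : p = q := by
  induction p using List.reverseRecOn generalizing v q with
  | nil => exact (not_isPath_nil hp).elim
  | append_singleton l x ih =>
    rcases q.eq_nil_or_concat' with rfl | ⟨l', y, rfl⟩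
    · exact (not_isPath_nil hq).elim
    obtain ⟨rfl, hp⟩ := isPath_append_singleton_iff.1 hp
    obtain ⟨rfl, hq⟩ := isPath_append_singleton_iff.1 hq
    rcases hp with ⟨rfl, hrx⟩ | ⟨w, hl, hw⟩ <;> rcases hq with ⟨rfl, hrx'⟩ | ⟨w', hl', hw'⟩
    · rfl
    · exact (hr _ (hrx ▸ hw')).elim
    · exact (hr _ (hrx' ▸ hw)).elim
    · rw [ih hl (hpar hw' hw ▸ hl')]

end Forest

section Network

variable {A : V → V → Prop} {ρ : V}

lemma IsNetwork.wellFounded (hN : IsNetwork A ρ) : WellFounded A := by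
  have := hN.finite
  have : IsTrans V (Relation.TransGen A) := ⟨fun _ _ _ => Relation.TransGen.trans⟩
  have : Std.Irrefl (Relation.TransGen A) := ⟨hN.acyclic⟩
  exact (Finite.wellFounded_of_trans_of_irrefl (Relation.TransGen A)).mono
    fun _ _ => Relation.TransGen.single

lemma IsNetwork.inDeg_le_one (hN : IsNetwork A ρ) {v : V} (hv : IsTreeNode A v) :
    inDeg A v ≤ 1 := by
  by_cases hvρ : v = ρ
  · exact hvρ ▸ hN.root_indeg.le.trans zero_le_one
  rcases hN.degree_cond v hvρ with ⟨h, -⟩ | hret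
  · exact h.le
  · exact (hv hret).elim

lemma IsNetwork.eq_of_adj_of_isTreeNode (hN : IsNetwork A ρ) {p q v : V} (hv : IsTreeNode A v)
    (hp : A p v) (hq : A q v) : p = q :=
  have := hN.finite
  (Set.ncard_le_one (Set.toFinite _)).1 (hN.inDeg_le_one hv) p hp q hq

end Network

namespace IsTNC

variable {A : V → V → Prop} {S : Set V} {a b r : V}

lemma isTreeNode_of_mem (hS : IsTNC A S) (ha : a ∈ S) : IsTreeNode A a := by
  obtain ⟨u, hu, rfl⟩ := hS
  rcases ha.cases_tail with rfl | ⟨c, -, hca⟩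
  exacts [hu, hca.2.1]

lemma nonempty (hS : IsTNC A S) : S.Nonempty := by
  obtain ⟨u, -, rfl⟩ := hS
  exact ⟨u, .refl⟩

lemma mem_of_tAdj (hS : IsTNC A S) (ha : a ∈ S) (hab : TAdj A a b) : b ∈ S := by
  obtain ⟨u, -, rfl⟩ := hS
  exact ha.tail hab

lemma reflTransGen_symmGen_restrict (hS : IsTNC A S) (ha : a ∈ S) (hb : b ∈ S) :
    Relation.ReflTransGen (Relation.SymmGen (Restrict A S)) a b := by
  obtain ⟨u, -, hSu⟩ := hS
  have hconn : ∀ v ∈ S, Relation.ReflTransGen (Relation.SymmGen (Restrict A S)) u v := by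
    intro v hv
    rw [hSu] at hv
    induction hv with
    | refl => rfl
    | @tail c d huc hcd ih =>
      have hc : c ∈ S := hSu ▸ huc
      have hd : d ∈ S := hSu ▸ huc.tail hcd
      exact ih.tail (hcd.2.2.imp (⟨hc, hd, ·⟩) (⟨hd, hc, ·⟩))
  exact (symm (hconn a ha)).trans (hconn b hb)

lemma compRoot_iff (hS : IsTNC A S) : CompRoot A S r ↔ r ∈ S ∧ ∀ x, ¬ Restrict A S x r := by
  refine and_congr_right fun hr => ⟨fun h x hx => h x (hS.isTreeNode_of_mem hx.1) hx.2.2,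
    fun h x hx hxr => h x ⟨hS.mem_of_tAdj hr ⟨hS.isTreeNode_of_mem hr, hx, .inr hxr⟩, hr, hxr⟩⟩

end IsTNC

/-- In a network, every connected component (ignoring edge directions) of the subgraph
induced on the tree nodes contains exactly one node of indegree 0 within that
subgraph, and the component is a tree in which all edges are directed away from that
node (i.e. there is a unique directed path within the component from that node to
every node of the component). -/
theorem tree_node_component_is_tree {V : Type} (A : V → V → Prop) (ρ : V)
    (hN : IsNetwork A ρ) (S : Set V) (hS : IsTNC A S) :
    ∃ r, (r ∈ S ∧ ∀ u, IsTreeNode A u → ¬ A u r) ∧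
      (∀ r', (r' ∈ S ∧ ∀ u, IsTreeNode A u → ¬ A u r') → r' = r) ∧
      (∀ v ∈ S, ∃! p : List V, IsPath (Restrict A S) r v p) := by
  set R := Restrict A S
  have hwf : WellFounded R := hN.wellFounded.mono fun _ _ h => h.2.2
  have hpar : ∀ ⦃p q v⦄, R p v → R q v → p = q := fun _ _ _ hp hq =>
    hN.eq_of_adj_of_isTreeNode (hS.isTreeNode_of_mem hp.2.1) hp.2.2 hq.2.2
  obtain ⟨u, hu⟩ := hS.nonempty
  obtain ⟨r, hr, hru⟩ := exists_root_reflTransGen hwf u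
  have hrS : r ∈ S := by
    rcases hru.cases_head with rfl | ⟨c, hrc, -⟩
    exacts [hu, hrc.1]
  have hreach : ∀ v ∈ S, Relation.ReflTransGen R r v := fun v hv =>
    reflTransGen_of_symmGen hpar hr (hS.reflTransGen_symmGen_restrict hrS hv)
  refine ⟨r, hS.compRoot_iff.2 ⟨hrS, hr⟩, fun r' hr' => ?_, fun v hv => ?_⟩
  · obtain ⟨hr'S, hr'⟩ := hS.compRoot_iff.1 hr'
    rcases (hreach r' hr'S).cases_tail with h | ⟨c, -, hc⟩
    exacts [h, (hr' c hc).elim]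
  · obtain ⟨p, hp⟩ := exists_isPath_of_reflTransGen_s2 (hreach v hv)
    exact ⟨p, hp, fun q hq => hq.eq_of_root hpar hr hp⟩

end PhyloNet
end

section
/- Let N be a reticulation-visible network and let C be a big tree node component of N (i.e., C has at least two nodes). Then either C contains a leaf of N, or there exists a reticulation node r of N all of whose parents lie in C. -/
/-!
Suppose `C` contains no leaf and every reticulation has a parent outside `C`. As `C` is closed
under tree-node neighbours, a directed path leaves `C` only through a reticulation with a parent
in `C` (an *exit* of `C`). If the root lies in `C`, a topmost exit has a parent outside `C`, and
the path from the root to that parent leaves `C` through a higher exit: impossible. Otherwise the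
parent `a` of a topmost node `x₀` of `C` is a reticulation whose only child is `x₀`; it is visible
on some leaf `ℓ`, which lies below `x₀` and outside `C`. By well-founded induction every exit below
`x₀` is reached from the root avoiding `a`: enter it from its parent `q ∉ C`, and if `q` is below
`a` then `q` is reached from an earlier exit below `x₀`. Following the exit on the way from `x₀`
to `ℓ` gives a path from the root to `ℓ` avoiding `a`, contradicting visibility.
-/

namespace PhyloNet

variable {V : Type} {A : V → V → Prop}

open Relation

def AvoidAdj (A : V → V → Prop) (a : V) : V → V → Prop := fun u v => A u v ∧ v ≠ a

def IsExitRet (A : V → V → Prop) (C : Set V) (r : V) : Prop := IsRet A r ∧ ∃ p ∈ C, A p r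

section Paths

variable {x y a : V}

theorem Visible.reflTransGen (hvis : Visible A x a y) (h : ReflTransGen A x y) :
    ReflTransGen A a y := by
  obtain ⟨l, hl, hlast⟩ := List.exists_isChain_cons_of_relationReflTransGen h
  have hp : IsPath A x y (x :: l) :=
    ⟨hl, rfl, by rw [List.getLast?_eq_getLast_of_ne_nil (List.cons_ne_nil _ _), hlast]⟩
  exact hl.backwards_cons_induction (ReflTransGen A · y) l hlast (fun _ _ => .head) .refl a
    (hvis _ hp)

theorem Visible.eq_of_reflTransGen_avoidAdj (hvis : Visible A x a y)
    (h : ReflTransGen (AvoidAdj A a) x y) : a = x := by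
  obtain ⟨l, hl, hlast⟩ := List.exists_isChain_cons_of_relationReflTransGen h
  have hp : IsPath A x y (x :: l) :=
    ⟨hl.imp fun _ _ => And.left, rfl,
      by rw [List.getLast?_eq_getLast_of_ne_nil (List.cons_ne_nil _ _), hlast]⟩
  have hmem := hl.induction (fun z => z = x ∨ z ≠ a) _ (fun _ _ h _ => .inr h.2)
    (fun _ => .inl rfl) a (hvis _ hp)
  exact hmem.resolve_right (not_not.2 rfl)

theorem reflTransGen_avoidAdj_of_not_reflTransGen_left (hxa : ¬ ReflTransGen A x a)
    (h : ReflTransGen A x y) : ReflTransGen (AvoidAdj A a) x y := by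
  induction h with
  | refl => exact .refl
  | tail hxb hbc ih => exact ih.tail ⟨hbc, fun hc => hxa (hc ▸ hxb.tail hbc)⟩

theorem reflTransGen_avoidAdj_of_not_reflTransGen_right (hay : ¬ ReflTransGen A a y)
    (h : ReflTransGen A x y) : ReflTransGen (AvoidAdj A a) x y := by
  induction h using ReflTransGen.head_induction_on with
  | refl => exact .refl
  | head hxc hcy ih => exact ih.head ⟨hxc, fun hc => hay (hc ▸ hcy)⟩

theorem reflTransGen_of_forall_adj_eq (hchild : ∀ y, A a y → y = x) (h : ReflTransGen A a y)
    (hya : y ≠ a) : ReflTransGen A x y := by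
  rcases h.cases_head with rfl | ⟨c, hac, hcy⟩
  · exact absurd rfl hya
  · exact hchild c hac ▸ hcy

end Paths

theorem IsRet.eq_of_adj {r x y : V} (hr : IsRet A r) (hx : A r x) (hy : A r y) : x = y := by
  obtain ⟨c, hc⟩ := Set.ncard_eq_one.1 hr.2
  have hx' : x ∈ {w | A r w} := hx
  have hy' : y ∈ {w | A r w} := hy
  rw [hc, Set.mem_singleton_iff] at hx' hy'
  exact hx'.trans hy'.symm

theorem IsTNC.isTreeNode_of_mem_s5 {S : Set V} (hS : IsTNC A S) {v : V} (hv : v ∈ S) :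
    IsTreeNode A v := by
  obtain ⟨u, hu, rfl⟩ := hS
  rcases hv.cases_tail with rfl | ⟨w, -, hwv⟩
  exacts [hu, hwv.2.1]

theorem IsTNC.mem_of_tAdj_s5 {S : Set V} (hS : IsTNC A S) {v w : V} (hv : v ∈ S)
    (hvw : TAdj A v w) : w ∈ S := by
  obtain ⟨u, -, rfl⟩ := hS
  exact ReflTransGen.tail hv hvw

theorem IsTNC.mem_of_mem_of_adj {S : Set V} (hS : IsTNC A S) {v w : V} (hv : v ∈ S)
    (hvw : A v w) (hw : IsTreeNode A w) : w ∈ S :=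
  hS.mem_of_tAdj_s5 hv ⟨hS.isTreeNode_of_mem_s5 hv, hw, .inl hvw⟩

theorem IsTNC.nonempty_s5 {S : Set V} (hS : IsTNC A S) : S.Nonempty := by
  obtain ⟨u, -, rfl⟩ := hS
  exact ⟨u, .refl⟩

theorem wellFounded_transGen_of_acyclic [Finite V] (hA : ∀ v, ¬ TransGen A v v) :
    WellFounded (TransGen A) :=
  have : IsTrans V (TransGen A) := ⟨fun _ _ _ => TransGen.trans⟩
  have : Std.Irrefl (TransGen A) := ⟨hA⟩
  Finite.wellFounded_of_trans_of_irrefl _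

theorem exists_isExitRet_of_reflTransGen {C : Set V}
    (hC : ∀ ⦃v w⦄, v ∈ C → A v w → IsTreeNode A w → w ∈ C) {x y : V} (hx : x ∈ C) (hy : y ∉ C)
    (h : ReflTransGen A x y) :
    ∃ r, IsExitRet A C r ∧ ReflTransGen A x r ∧ ReflTransGen A r y := by
  induction h using ReflTransGen.head_induction_on with
  | refl => exact absurd hx hy
  | @head u c huc hcy ih =>
    by_cases hc : IsRet A c
    · exact ⟨c, ⟨hc, u, hx, huc⟩, .single huc, hcy⟩
    · obtain ⟨r, hr, hcr, hry⟩ := ih (hC hx huc hc)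
      exact ⟨r, hr, hcr.head huc, hry⟩

namespace IsNetwork

variable {ρ : V}

theorem wellFounded_transGen (hN : IsNetwork A ρ) : WellFounded (TransGen A) :=
  have := hN.finite
  wellFounded_transGen_of_acyclic hN.acyclic

theorem exists_isLeaf (hN : IsNetwork A ρ) : ∃ ℓ, IsLeaf A ℓ := by
  have := hN.finite
  have hwf : WellFounded (TransGen (flip A)) :=
    wellFounded_transGen_of_acyclic fun v h => hN.acyclic v (transGen_swap.1 h)
  obtain ⟨m, -, hm⟩ := hwf.has_min Set.univ ⟨ρ, trivial⟩
  have hout : outDeg A m = 0 := by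
    have hno : {w | A m w} = ∅ :=
      Set.eq_empty_of_forall_notMem fun w hw => hm w trivial (.single hw)
    rw [outDeg, hno, Set.ncard_empty]
  have hmρ : m ≠ ρ := fun h => by have := hN.root_outdeg; rw [← h] at this; omega
  rcases hN.degree_cond m hmρ with ⟨hin, -⟩ | ⟨-, hout'⟩
  · exact ⟨m, hin, hout⟩
  · omega

theorem exists_adj_of_ne_root (hN : IsNetwork A ρ) {v : V} (hv : v ≠ ρ) : ∃ u, A u v := by
  rcases (hN.reach_from_root v).cases_tail with rfl | ⟨u, -, huv⟩
  exacts [absurd rfl hv, ⟨u, huv⟩]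

theorem ne_root_of_isRet (hN : IsNetwork A ρ) {r : V} (hr : IsRet A r) : r ≠ ρ := by
  rintro rfl
  have := hr.1
  rw [hN.root_indeg] at this
  omega

theorem exists_isRet_forall_mem_of_root_mem (hN : IsNetwork A ρ) {C : Set V}
    (hC : ∀ ⦃v w⦄, v ∈ C → A v w → IsTreeNode A w → w ∈ C) (hρ : ρ ∈ C)
    (hleaf : ¬ ∃ ℓ ∈ C, IsLeaf A ℓ) : ∃ r, IsRet A r ∧ ∀ p, A p r → p ∈ C := by
  obtain ⟨ℓ, hℓ⟩ := hN.exists_isLeaf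
  obtain ⟨r, hr, -⟩ :=
    exists_isExitRet_of_reflTransGen hC hρ (fun h => hleaf ⟨ℓ, h, hℓ⟩) (hN.reach_from_root ℓ)
  obtain ⟨m, hm, hmin⟩ := hN.wellFounded_transGen.has_min {r | IsExitRet A C r} ⟨r, hr⟩
  refine ⟨m, hm.1, fun q hqm => by_contra fun hq => ?_⟩
  obtain ⟨r', hr', -, hr'q⟩ :=
    exists_isExitRet_of_reflTransGen hC hρ hq (hN.reach_from_root q)
  exact hmin r' hr' (.tail' hr'q hqm)

theorem reflTransGen_avoidAdj_of_isExitRet (hN : IsNetwork A ρ) {C : Set V}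
    (hC : ∀ ⦃v w⦄, v ∈ C → A v w → IsTreeNode A w → w ∈ C)
    (hret : ∀ r, IsRet A r → ∃ p, A p r ∧ p ∉ C) {x₀ a : V} (hx₀C : x₀ ∈ C)
    (hx₀ : IsTreeNode A x₀) (hchild : ∀ y, A a y → y = x₀) (hx₀a : ¬ ReflTransGen A x₀ a)
    {s : V} (hs : IsExitRet A C s) (hx₀s : ReflTransGen A x₀ s) :
    ReflTransGen (AvoidAdj A a) ρ s := by
  induction s using hN.wellFounded_transGen.induction with
  | _ s ih =>
  obtain ⟨q, hqs, hqC⟩ := hret s hs.1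
  have hsa : s ≠ a := fun h => hx₀a (h ▸ hx₀s)
  suffices ReflTransGen (AvoidAdj A a) ρ q from this.tail ⟨hqs, hsa⟩
  by_cases haq : ReflTransGen A a q
  · have hqa : q ≠ a := by
      rintro rfl
      exact hx₀ (hchild s hqs ▸ hs.1)
    obtain ⟨r, hr, hx₀r, hrq⟩ := exists_isExitRet_of_reflTransGen hC hx₀C hqC
      (reflTransGen_of_forall_adj_eq hchild haq hqa)
    exact (ih r (.tail' hrq hqs) hr hx₀r).trans
      (reflTransGen_avoidAdj_of_not_reflTransGen_left (fun h => hx₀a (hx₀r.trans h)) hrq)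
  · exact reflTransGen_avoidAdj_of_not_reflTransGen_right haq (hN.reach_from_root q)

theorem exists_isRet_forall_mem_of_root_not_mem (hN : IsNetwork A ρ) (hRV : RetVisible A ρ)
    {C : Set V} (hS : IsTNC A C) (hρ : ρ ∉ C) (hleaf : ¬ ∃ ℓ ∈ C, IsLeaf A ℓ) :
    ∃ r, IsRet A r ∧ ∀ p, A p r → p ∈ C := by
  by_contra! hret
  have hC : ∀ ⦃v w⦄, v ∈ C → A v w → IsTreeNode A w → w ∈ C :=
    fun _ _ => hS.mem_of_mem_of_adj
  obtain ⟨x₀, hx₀C, hx₀min⟩ := hN.wellFounded_transGen.has_min C hS.nonempty_s5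
  have hx₀ := hS.isTreeNode_of_mem_s5 hx₀C
  obtain ⟨a, hax₀⟩ := hN.exists_adj_of_ne_root (ne_of_mem_of_not_mem hx₀C hρ)
  have ha : IsRet A a := by_contra fun ha =>
    hx₀min a (hS.mem_of_tAdj_s5 hx₀C ⟨hx₀, ha, .inr hax₀⟩) (.single hax₀)
  have hchild : ∀ y, A a y → y = x₀ := fun _ hy => ha.eq_of_adj hy hax₀
  have hx₀a : ¬ ReflTransGen A x₀ a := fun h => hN.acyclic a (.head' hax₀ h)
  obtain ⟨ℓ, hℓ, hvis⟩ := hRV a ha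
  have hℓa : ℓ ≠ a := fun h => by have := hℓ.2; rw [h, ha.2] at this; omega
  have hx₀ℓ := reflTransGen_of_forall_adj_eq hchild (hvis.reflTransGen (hN.reach_from_root ℓ)) hℓa
  obtain ⟨r, hr, hx₀r, hrℓ⟩ :=
    exists_isExitRet_of_reflTransGen hC hx₀C (fun h => hleaf ⟨ℓ, h, hℓ⟩) hx₀ℓ
  have havoid : ReflTransGen (AvoidAdj A a) ρ ℓ :=
    (hN.reflTransGen_avoidAdj_of_isExitRet hC hret hx₀C hx₀ hchild hx₀a hr hx₀r).trans
      (reflTransGen_avoidAdj_of_not_reflTransGen_left (fun h => hx₀a (hx₀r.trans h)) hrℓ)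
  exact hN.ne_root_of_isRet ha (hvis.eq_of_reflTransGen_avoidAdj havoid)

end IsNetwork

/-- In a reticulation-visible network, every big tree node component `C` either contains
a leaf of the network, or there is a reticulation node all of whose parents lie in
`C`. -/
theorem big_component_leaf_or_inner_ret {V : Type} (A : V → V → Prop) (ρ : V)
    (hN : IsNetwork A ρ) (hRV : RetVisible A ρ)
    (C : Set V) (hC : BigTNC A C) :
    (∃ ℓ ∈ C, IsLeaf A ℓ) ∨ ∃ r, IsRet A r ∧ ∀ p, A p r → p ∈ C := by
  refine or_iff_not_imp_left.2 fun hleaf => ?_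
  by_cases hρ : ρ ∈ C
  · exact hN.exists_isRet_forall_mem_of_root_mem (fun _ _ => hC.1.mem_of_mem_of_adj) hρ hleaf
  · exact hN.exists_isRet_forall_mem_of_root_not_mem hRV hC.1 hρ hleaf

end PhyloNet
end
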